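/- arXiv:1609.02447 — 2 statements merged into one kernel-verified Lean document; each statement's English description precedes it below -/
import Mathlib

section
/- Let {ξ_z}_{z∈ℤ²} be i.i.d. uniform [0,1] random variables. For each i ≥ 1 let S_i = {z ∈ ℤ² : ξ_z ≤ 4^{-i}} and let V_i(z) be the Voronoi cell of z with respect to S_i (the set of points whose ℓ¹-nearest point of S_i, with ties broken by minimal ξ-value, equals that of z). Then for every fixed pair u, v ∈ ℤ², almost surely V_i(u) = V_i(v) for all sufficiently large i. -/
open MeasureTheory Filter Topology

/-! Put `p = 4⁻ⁱ` and `m = i 2ⁱ`. The box of radius `m` around `u` misses `S_i` with probability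
`(1 - p)^((2m+1)²) ≤ e⁻ⁱ`. Otherwise the nearest sites `a` and `b` of `u` and `v` satisfy
`d(a, u) ≤ 2m` and `d(a, u) ≤ d(b, u) ≤ d(a, u) + 2 d(u, v)`, so if `a ≠ b` then `b` lies in an
ℓ¹-annulus of width `2 d(u, v)` around `u`. There are `O(m³)` such pairs `(a, b)`, each lying in
`S_i` with probability `p²`, which gives `O(i³ 2⁻ⁱ)`. Both bounds are summable in `i`, so by
Borel–Cantelli almost surely neither event happens for large `i`. -/

/-- ℓ¹-distance on `ℤ²`. -/
def d1 (u v : ℤ × ℤ) : ℤ := |u.1 - v.1| + |u.2 - v.2|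

lemma d1_nonneg (a b : ℤ × ℤ) : 0 ≤ d1 a b := by unfold d1; positivity

lemma d1_comm (a b : ℤ × ℤ) : d1 a b = d1 b a := by
  simp only [d1, abs_sub_comm]

lemma d1_triangle (a b c : ℤ × ℤ) : d1 a c ≤ d1 a b + d1 b c := by
  have := abs_sub_le a.1 b.1 c.1
  have := abs_sub_le a.2 b.2 c.2
  unfold d1; linarith

lemma abs_fst_sub_le_d1 (a u : ℤ × ℤ) : |a.1 - u.1| ≤ d1 a u :=
  le_add_of_nonneg_right (abs_nonneg _)

noncomputable def box (c : ℤ × ℤ) (r : ℕ) : Finset (ℤ × ℤ) :=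
  Finset.Icc (c.1 - r) (c.1 + r) ×ˢ Finset.Icc (c.2 - r) (c.2 + r)

lemma mem_box {c z : ℤ × ℤ} {r : ℕ} :
    z ∈ box c r ↔ |z.1 - c.1| ≤ r ∧ |z.2 - c.2| ≤ r := by
  simp only [box, Finset.mem_product, Finset.mem_Icc, abs_le]
  omega

lemma card_box (c : ℤ × ℤ) (r : ℕ) : (box c r).card = (2 * r + 1) ^ 2 := by
  simp only [box, Finset.card_product, Int.card_Icc,
    show ∀ x : ℤ, (x + r + 1 - (x - r)).toNat = 2 * r + 1 by omega, sq]

lemma d1_le_of_mem_box {c z : ℤ × ℤ} {r : ℕ} (hz : z ∈ box c r) : d1 z c ≤ 2 * r := by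
  rw [mem_box] at hz; unfold d1; linarith [hz.1, hz.2]

noncomputable def annulus (u : ℤ × ℤ) (r w : ℕ) : Finset (ℤ × ℤ) :=
  (box u (r + w)).filter fun b => r ≤ d1 b u ∧ d1 b u ≤ (r + w : ℕ)

lemma mem_annulus {u b : ℤ × ℤ} {r w : ℕ} :
    b ∈ annulus u r w ↔ r ≤ d1 b u ∧ d1 b u ≤ (r + w : ℕ) := by
  refine Finset.mem_filter.trans (and_iff_right_of_imp fun h => mem_box.2 ⟨?_, ?_⟩)
  · unfold d1 at h; linarith [abs_nonneg (b.2 - u.2)]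
  · unfold d1 at h; linarith [abs_nonneg (b.1 - u.1)]

/-- A point of an annulus is determined by its first coordinate, its distance to the centre and
the side of the centre's horizontal line on which it lies. -/
lemma card_annulus_le (u : ℤ × ℤ) (r w : ℕ) :
    (annulus u r w).card ≤ (2 * (r + w) + 1) * (w + 1) * 2 := by
  have key := Finset.card_le_card_of_injOn
    (fun b : ℤ × ℤ => ((b.1, d1 b u), decide (u.2 ≤ b.2)))
    (s := annulus u r w) (t := (Finset.Icc (u.1 - (r + w : ℕ)) (u.1 + (r + w : ℕ)) ×ˢ
      Finset.Icc (r : ℤ) (r + w : ℕ)) ×ˢ Finset.univ) ?_ ?_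
  · simpa only [Finset.card_product, Int.card_Icc, Finset.card_univ, Fintype.card_bool,
      show ∀ n : ℕ, (u.1 + n + 1 - (u.1 - n)).toNat = 2 * n + 1 by omega,
      show ((r + w : ℕ) + 1 - r : ℤ).toNat = w + 1 by omega] using key
  · intro b hb
    rw [Finset.mem_coe, mem_annulus] at hb
    simp only [Finset.coe_product, Set.mem_prod, Finset.coe_Icc, Set.mem_Icc, Finset.coe_univ,
      Set.mem_univ, and_true]
    have := abs_fst_sub_le_d1 b u
    rw [abs_le] at this
    omega
  · rintro b - b' - h
    simp only [Prod.mk.injEq, decide_eq_decide] at h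
    obtain ⟨⟨h1, hd⟩, hs⟩ := h
    unfold d1 at hd
    rw [h1] at hd
    ext
    · exact h1
    · rcases abs_cases (b.2 - u.2) with ⟨e, _⟩ | ⟨e, _⟩ <;>
        rcases abs_cases (b'.2 - u.2) with ⟨e', _⟩ | ⟨e', _⟩ <;> omega

def IsNearest (S : Set (ℤ × ℤ)) (z a : ℤ × ℤ) : Prop :=
  a ∈ S ∧ ∀ s ∈ S, d1 a z ≤ d1 s z

lemma IsNearest.mem_annulus_zero {S : Set (ℤ × ℤ)} {u a z : ℤ × ℤ} (ha : IsNearest S u a)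
    (hz : z ∈ S) {R : ℕ} (hzu : d1 z u ≤ R) : a ∈ annulus u 0 R :=
  mem_annulus.2 ⟨by simpa using d1_nonneg a u, by simpa using (ha.2 z hz).trans hzu⟩

lemma IsNearest.mem_annulus_of_isNearest {S : Set (ℤ × ℤ)} {u v a b : ℤ × ℤ}
    (ha : IsNearest S u a) (hb : IsNearest S v b) :
    b ∈ annulus u (d1 a u).toNat (2 * (d1 u v).toNat) := by
  have hle : d1 a u ≤ d1 b u := ha.2 b hb.1
  have hge : d1 b u ≤ d1 a u + 2 * d1 u v :=
    calc d1 b u ≤ d1 b v + d1 v u := d1_triangle b v u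
      _ ≤ d1 a v + d1 u v := by rw [d1_comm v u]; gcongr; exact hb.2 a ha.1
      _ ≤ d1 a u + d1 u v + d1 u v := by gcongr; exact d1_triangle a u v
      _ = d1 a u + 2 * d1 u v := by ring
  have := d1_nonneg a u
  have := d1_nonneg u v
  rw [mem_annulus]
  omega

section Events

variable {Ω : Type*} (ξ : ℤ × ℤ → Ω → ℝ) (p : ℝ) (u : ℤ × ℤ)

def boxEmpty (m : ℕ) : Set Ω := ⋂ z ∈ box u m, ξ z ⁻¹' Set.Ioi p

def closePair (R D : ℕ) : Set Ω :=
  ⋃ a ∈ annulus u 0 R, ⋃ b ∈ (annulus u (d1 a u).toNat (2 * D)).erase a,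
    ξ a ⁻¹' Set.Iic p ∩ ξ b ⁻¹' Set.Iic p

variable {ξ p u}

lemma eq_of_isNearest_of_notMem {v a b : ℤ × ℤ} {ω : Ω} {m : ℕ}
    (ha : IsNearest {z | ξ z ω ≤ p} u a) (hb : IsNearest {z | ξ z ω ≤ p} v b)
    (hbox : ω ∉ boxEmpty ξ p u m) (hpair : ω ∉ closePair ξ p u (2 * m) (d1 u v).toNat) :
    a = b := by
  simp only [boxEmpty, Set.mem_iInter, Set.mem_preimage, Set.mem_Ioi, not_forall, not_lt] at hbox
  obtain ⟨z, hz, hzp⟩ := hbox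
  by_contra hne
  refine hpair (Set.mem_biUnion (ha.mem_annulus_zero hzp ?_) (Set.mem_biUnion
    (Finset.mem_erase.2 ⟨Ne.symm hne, ha.mem_annulus_of_isNearest hb⟩) ⟨ha.1, hb.1⟩))
  exact_mod_cast d1_le_of_mem_box hz

end Events

section Uniform

variable {Ω ι : Type*} [MeasurableSpace Ω] {ℙ : Measure Ω}

lemma measure_preimage_Iic_of_map_eq_uniform {X : Ω → ℝ} (hX : Measurable X)
    (hunif : ℙ.map X = volume.restrict (Set.Icc 0 1)) {p : ℝ} (hp1 : p ≤ 1) :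
    ℙ (X ⁻¹' Set.Iic p) = ENNReal.ofReal p := by
  rw [← Measure.map_apply hX measurableSet_Iic, hunif, Measure.restrict_apply measurableSet_Iic,
    show Set.Iic p ∩ Set.Icc 0 1 = Set.Icc 0 p by ext; grind, Real.volume_Icc, sub_zero]

lemma measure_preimage_Ioi_of_map_eq_uniform {X : Ω → ℝ} (hX : Measurable X)
    (hunif : ℙ.map X = volume.restrict (Set.Icc 0 1)) {p : ℝ} (hp0 : 0 ≤ p) :
    ℙ (X ⁻¹' Set.Ioi p) = ENNReal.ofReal (1 - p) := by
  rw [← Measure.map_apply hX measurableSet_Ioi, hunif, Measure.restrict_apply measurableSet_Ioi,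
    show Set.Ioi p ∩ Set.Icc 0 1 = Set.Ioc p 1 by ext; grind, Real.volume_Ioc]

variable {ξ : ι → Ω → ℝ} (hmeas : ∀ z, Measurable (ξ z))
  (hindep : ProbabilityTheory.iIndepFun ξ ℙ)
  (hunif : ∀ z, ℙ.map (ξ z) = volume.restrict (Set.Icc (0 : ℝ) 1))
include hmeas hindep hunif

lemma measure_biInter_preimage_Ioi (T : Finset ι) {p : ℝ} (hp0 : 0 ≤ p) :
    ℙ (⋂ z ∈ T, ξ z ⁻¹' Set.Ioi p) = ENNReal.ofReal (1 - p) ^ T.card := by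
  rw [hindep.measure_inter_preimage_eq_mul T (fun _ _ => measurableSet_Ioi),
    Finset.prod_congr rfl fun z _ =>
      measure_preimage_Ioi_of_map_eq_uniform (hmeas z) (hunif z) hp0,
    Finset.prod_const]

lemma measure_preimage_Iic_inter_preimage_Iic {a b : ι} (hab : a ≠ b) {p : ℝ} (hp1 : p ≤ 1) :
    ℙ (ξ a ⁻¹' Set.Iic p ∩ ξ b ⁻¹' Set.Iic p) = ENNReal.ofReal p ^ 2 := by
  rw [(hindep.indepFun hab).measure_inter_preimage_eq_mul _ _ measurableSet_Iic measurableSet_Iic,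
    measure_preimage_Iic_of_map_eq_uniform (hmeas a) (hunif a) hp1,
    measure_preimage_Iic_of_map_eq_uniform (hmeas b) (hunif b) hp1, sq]

end Uniform

lemma inv_four_pow_mul_two_pow_sq (i : ℕ) : (4 : ℝ)⁻¹ ^ i * (2 ^ i) ^ 2 = 1 := by
  rw [← pow_mul, mul_comm i, pow_mul, ← mul_pow]; norm_num

lemma one_sub_inv_four_pow_pow_le (i : ℕ) :
    (1 - (4 : ℝ)⁻¹ ^ i) ^ (2 * (i * 2 ^ i) + 1) ^ 2 ≤ Real.exp (-1) ^ i := by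
  set p : ℝ := (4 : ℝ)⁻¹ ^ i
  have hp1 : p ≤ 1 := pow_le_one₀ (by norm_num) (by norm_num)
  have hpK : (i : ℝ) ≤ p * ((2 * (i * 2 ^ i) + 1) ^ 2 : ℕ) :=
    calc (i : ℝ) ≤ (i : ℝ) ^ 2 := by exact_mod_cast Nat.le_self_pow two_ne_zero i
      _ = p * ((i : ℝ) * 2 ^ i) ^ 2 := by
        linear_combination (-(i : ℝ) ^ 2) * inv_four_pow_mul_two_pow_sq i
      _ ≤ p * ((2 * (i * 2 ^ i) + 1) ^ 2 : ℕ) := by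
        push_cast; gcongr; linarith [show (0 : ℝ) ≤ i * 2 ^ i by positivity]
  calc (1 - p) ^ (2 * (i * 2 ^ i) + 1) ^ 2
      ≤ Real.exp (-p) ^ (2 * (i * 2 ^ i) + 1) ^ 2 :=
        pow_le_pow_left₀ (by linarith) (Real.one_sub_le_exp_neg p) _
    _ = Real.exp (-(p * ((2 * (i * 2 ^ i) + 1) ^ 2 : ℕ))) := by
        rw [← Real.exp_nat_mul]; ring_nf
    _ ≤ Real.exp (-1) ^ i := by
        rw [← Real.exp_nat_mul]; gcongr; linarith

lemma closePair_count_le (i D : ℕ) :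
    (((2 * (2 * (i * 2 ^ i)) + 1) * (2 * (i * 2 ^ i) + 1) * 2 *
      ((2 * (2 * (i * 2 ^ i) + 2 * D) + 1) * (2 * D + 1) * 2) : ℕ) : ℝ) * ((4 : ℝ)⁻¹ ^ i) ^ 2 ≤
      60 * (4 * D + 5) * (2 * D + 1) * (((i : ℝ) + 1) ^ 3 * 2⁻¹ ^ i) := by
  set a : ℝ := 2 ^ i
  set m : ℝ := i * a
  set x : ℝ := ((i : ℝ) + 1) * a
  have ha : 1 ≤ a := one_le_pow₀ (by norm_num)
  have hm : 0 ≤ m := by positivity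
  have hx : x = m + a := by ring
  have hD : (0 : ℝ) ≤ D := by positivity
  have hpa : (4 : ℝ)⁻¹ ^ i * a ^ 2 = 1 := inv_four_pow_mul_two_pow_sq i
  have hha : a * 2⁻¹ ^ i = 1 := by rw [← mul_pow]; norm_num
  have hkey : ((4 : ℝ)⁻¹ ^ i) ^ 2 * a ^ 3 = 2⁻¹ ^ i := by
    linear_combination ((4 : ℝ)⁻¹ ^ i * a + 2⁻¹ ^ i) * hpa - (4 : ℝ)⁻¹ ^ i * a * hha
  calc (((2 * (2 * (i * 2 ^ i)) + 1) * (2 * (i * 2 ^ i) + 1) * 2 *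
      ((2 * (2 * (i * 2 ^ i) + 2 * D) + 1) * (2 * D + 1) * 2) : ℕ) : ℝ) * ((4 : ℝ)⁻¹ ^ i) ^ 2
      = (4 * m + 1) * (2 * m + 1) * (4 * m + 4 * D + 1) * (4 * (2 * D + 1)) *
          ((4 : ℝ)⁻¹ ^ i) ^ 2 := by push_cast; ring
    _ ≤ (5 * x) * (3 * x) * ((4 * D + 5) * x) * (4 * (2 * D + 1)) * ((4 : ℝ)⁻¹ ^ i) ^ 2 := by
        gcongr
        · linarith
        · linarith
        · nlinarith [mul_le_mul_of_nonneg_left ha hD, mul_nonneg hD hm]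
    _ = 60 * (4 * D + 5) * (2 * D + 1) * (((i : ℝ) + 1) ^ 3 * 2⁻¹ ^ i) := by
        linear_combination (60 * (4 * D + 5) * (2 * D + 1) * ((i : ℝ) + 1) ^ 3) * hkey

lemma summable_succ_pow_mul_geometric_half (k : ℕ) :
    Summable fun n : ℕ => ((n : ℝ) + 1) ^ k * 2⁻¹ ^ n := by
  have h := (summable_nat_add_iff 1).2
    (summable_pow_mul_geometric_of_norm_lt_one k (r := (2⁻¹ : ℝ)) (by norm_num))
  refine (h.mul_left 2).congr fun n => ?_
  push_cast; ring

section Probability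

variable {Ω : Type*} [MeasurableSpace Ω] {ℙ : Measure Ω} {ξ : ℤ × ℤ → Ω → ℝ}
  (hmeas : ∀ z, Measurable (ξ z)) (hindep : ProbabilityTheory.iIndepFun ξ ℙ)
  (hunif : ∀ z, ℙ.map (ξ z) = volume.restrict (Set.Icc (0 : ℝ) 1))
include hmeas hindep hunif

lemma measure_boxEmpty (u : ℤ × ℤ) (m : ℕ) {p : ℝ} (hp0 : 0 ≤ p) :
    ℙ (boxEmpty ξ p u m) = ENNReal.ofReal (1 - p) ^ (2 * m + 1) ^ 2 := by
  rw [boxEmpty, measure_biInter_preimage_Ioi hmeas hindep hunif _ hp0, card_box]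

lemma measure_closePair_le (u : ℤ × ℤ) (R D : ℕ) {p : ℝ} (hp1 : p ≤ 1) :
    ℙ (closePair ξ p u R D) ≤
      ((2 * R + 1) * (R + 1) * 2 * ((2 * (R + 2 * D) + 1) * (2 * D + 1) * 2) : ℕ) *
        ENNReal.ofReal p ^ 2 := by
  have hcard : ∀ a ∈ annulus u 0 R, ((annulus u (d1 a u).toNat (2 * D)).erase a).card ≤
      (2 * (R + 2 * D) + 1) * (2 * D + 1) * 2 := by
    intro a ha
    have : (d1 a u).toNat ≤ R := by rw [mem_annulus] at ha; omega
    refine (Finset.card_erase_le).trans ((card_annulus_le _ _ _).trans ?_)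
    gcongr
  calc ℙ (closePair ξ p u R D)
      ≤ ∑ a ∈ annulus u 0 R, ∑ b ∈ (annulus u (d1 a u).toNat (2 * D)).erase a,
          ℙ (ξ a ⁻¹' Set.Iic p ∩ ξ b ⁻¹' Set.Iic p) :=
        (measure_biUnion_finset_le _ _).trans
          (Finset.sum_le_sum fun _ _ => measure_biUnion_finset_le _ _)
    _ = ∑ a ∈ annulus u 0 R, ((annulus u (d1 a u).toNat (2 * D)).erase a).card *
          ENNReal.ofReal p ^ 2 := by
        refine Finset.sum_congr rfl fun a _ => ?_
        rw [Finset.sum_congr rfl fun b hb => measure_preimage_Iic_inter_preimage_Iic hmeas hindep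
          hunif (Finset.ne_of_mem_erase hb).symm hp1, Finset.sum_const, nsmul_eq_mul]
    _ ≤ ∑ a ∈ annulus u 0 R, ((2 * (R + 2 * D) + 1) * (2 * D + 1) * 2 : ℕ) *
          ENNReal.ofReal p ^ 2 := by
        gcongr with a ha
        exact_mod_cast hcard a ha
    _ ≤ _ := by
        rw [Finset.sum_const, nsmul_eq_mul, ← mul_assoc, ← Nat.cast_mul]
        gcongr
        simpa using card_annulus_le u 0 R

lemma measure_boxEmpty_inv_four_pow_le (u : ℤ × ℤ) (i : ℕ) :
    ℙ (boxEmpty ξ ((4 : ℝ)⁻¹ ^ i) u (i * 2 ^ i)) ≤ ENNReal.ofReal (Real.exp (-1) ^ i) := by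
  rw [measure_boxEmpty hmeas hindep hunif u _ (by positivity),
    ← ENNReal.ofReal_pow (sub_nonneg.2 (pow_le_one₀ (by norm_num) (by norm_num)))]
  exact ENNReal.ofReal_le_ofReal (one_sub_inv_four_pow_pow_le i)

lemma measure_closePair_inv_four_pow_le (u : ℤ × ℤ) (i D : ℕ) :
    ℙ (closePair ξ ((4 : ℝ)⁻¹ ^ i) u (2 * (i * 2 ^ i)) D) ≤
      ENNReal.ofReal (60 * (4 * D + 5) * (2 * D + 1) * (((i : ℝ) + 1) ^ 3 * 2⁻¹ ^ i)) := by
  refine (measure_closePair_le hmeas hindep hunif u _ D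
    (pow_le_one₀ (by norm_num) (by norm_num))).trans ?_
  rw [← ENNReal.ofReal_pow (by positivity), ← ENNReal.ofReal_natCast,
    ← ENNReal.ofReal_mul (by positivity)]
  exact ENNReal.ofReal_le_ofReal (closePair_count_le i D)

end Probability

theorem voronoi_cells_eventually_equal_general {Ω : Type*} [MeasurableSpace Ω]
    (ℙ : Measure Ω)
    (ξ : ℤ × ℤ → Ω → ℝ)
    (hmeas : ∀ z, Measurable (ξ z))
    (hindep : ProbabilityTheory.iIndepFun ξ ℙ)
    (hunif : ∀ z, Measure.map (ξ z) ℙ = volume.restrict (Set.Icc (0 : ℝ) 1))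
    (f : ℕ → Ω → ℤ × ℤ → ℤ × ℤ)
    (hf : ∀ᵐ ω ∂ℙ, ∀ i : ℕ, 1 ≤ i → ∀ z : ℤ × ℤ,
      ξ (f i ω z) ω ≤ (4 : ℝ)⁻¹ ^ i ∧
      (∀ s : ℤ × ℤ, ξ s ω ≤ (4 : ℝ)⁻¹ ^ i → d1 (f i ω z) z ≤ d1 s z) ∧
      (∀ s : ℤ × ℤ, ξ s ω ≤ (4 : ℝ)⁻¹ ^ i → d1 s z = d1 (f i ω z) z →
        ξ (f i ω z) ω ≤ ξ s ω))
    (u v : ℤ × ℤ) :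
    ∀ᵐ ω ∂ℙ, ∀ᶠ i in atTop, f i ω u = f i ω v := by
  have hbox : ∀ᵐ ω ∂ℙ, ∀ᶠ i in atTop, ω ∉ boxEmpty ξ ((4 : ℝ)⁻¹ ^ i) u (i * 2 ^ i) :=
    ae_eventually_notMem <| ne_top_of_le_ne_top
      (summable_geometric_of_lt_one (Real.exp_nonneg _)
        (Real.exp_lt_one_iff.2 (by norm_num))).tsum_ofReal_ne_top
      (ENNReal.tsum_le_tsum fun i => measure_boxEmpty_inv_four_pow_le hmeas hindep hunif u i)
  have hpair : ∀ᵐ ω ∂ℙ, ∀ᶠ i in atTop,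
      ω ∉ closePair ξ ((4 : ℝ)⁻¹ ^ i) u (2 * (i * 2 ^ i)) (d1 u v).toNat :=
    ae_eventually_notMem <| ne_top_of_le_ne_top
      ((summable_succ_pow_mul_geometric_half 3).mul_left _).tsum_ofReal_ne_top
      (ENNReal.tsum_le_tsum fun i =>
        measure_closePair_inv_four_pow_le hmeas hindep hunif u i (d1 u v).toNat)
  filter_upwards [hf, hbox, hpair] with ω hfω hboxω hpairω
  filter_upwards [hboxω, hpairω, eventually_ge_atTop 1] with i hboxi hpairi hi
  exact eq_of_isNearest_of_notMem ⟨(hfω i hi u).1, (hfω i hi u).2.1⟩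
    ⟨(hfω i hi v).1, (hfω i hi v).2.1⟩ hboxi hpairi

/-- for i.i.d. uniform `[0,1]` labels `ξ_z` on `ℤ²`, let
`S_i = {z : ξ_z ≤ 4^{-i}}` and let `f i ω z` be the ℓ¹-nearest point of `S_i` to `z`
(ties broken by minimal ξ-value).  Then for every fixed pair `u, v`, almost surely
the Voronoi cells of `u` and `v` agree (`f i ω u = f i ω v`) for all large `i`. -/
theorem voronoi_cells_eventually_equal {Ω : Type*} [MeasurableSpace Ω]
    (ℙ : Measure Ω) [IsProbabilityMeasure ℙ]
    (ξ : ℤ × ℤ → Ω → ℝ)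
    (hmeas : ∀ z, Measurable (ξ z))
    (hindep : ProbabilityTheory.iIndepFun ξ ℙ)
    (hunif : ∀ z, Measure.map (ξ z) ℙ = volume.restrict (Set.Icc (0 : ℝ) 1))
    (f : ℕ → Ω → ℤ × ℤ → ℤ × ℤ)
    (hf : ∀ᵐ ω ∂ℙ, ∀ i : ℕ, 1 ≤ i → ∀ z : ℤ × ℤ,
      ξ (f i ω z) ω ≤ (4 : ℝ)⁻¹ ^ i ∧
      (∀ s : ℤ × ℤ, ξ s ω ≤ (4 : ℝ)⁻¹ ^ i → d1 (f i ω z) z ≤ d1 s z) ∧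
      (∀ s : ℤ × ℤ, ξ s ω ≤ (4 : ℝ)⁻¹ ^ i → d1 s z = d1 (f i ω z) z →
        ξ (f i ω z) ω ≤ ξ s ω))
    (u v : ℤ × ℤ) :
    ∀ᵐ ω ∂ℙ, ∀ᶠ i in atTop, f i ω u = f i ω v :=
  voronoi_cells_eventually_equal_general ℙ ξ hmeas hindep hunif f hf u v
end

section
/- Let T be a random pseudometric on ℤ² satisfying the extended shape theorem (for every ε > 0, a.s. for all |z| large, |T(z,z+y) − μ(y)| ≤ ε max{|z|,|y|} for all y, where μ is a norm), and let B : ℤ² × ℤ² → ℝ be an additive cocycle with |B(x,y)| ≤ T(x,y) for all x,y. Let ρ : ℝ² → ℝ be linear and suppose that for every v ∈ ℤ², almost surely lim_{n→∞} B(0, n v)/n = ρ(v). Then almost surely limsup_{|z|→∞} |B(0,z) − ρ(z)|/|z| = 0. -/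
open MeasureTheory Filter Topology

/-- Euclidean norm of a point of `ℤ²`. -/
noncomputable def znorm (z : ℤ × ℤ) : ℝ := Real.sqrt ((z.1 : ℝ) ^ 2 + (z.2 : ℝ) ^ 2)

/-- Embedding `ℤ² ↪ ℝ²`. -/
def toR (z : ℤ × ℤ) : ℝ × ℝ := ((z.1 : ℝ), (z.2 : ℝ))

/-!
Fix an outcome ω and put `f z = B(0, z) - ρ(z)`. The cocycle identity and `|B| ≤ T` turn the
shape theorem into an increment bound `|f (x + y) - f x| ≤ C ‖y‖ + δ max ‖x‖ ‖y‖` for large `x`,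
where `C` bounds both `μ` and `ρ`. Dividing `z` coordinatewise by `n ≈ ‖z‖ / M` writes
`z = n • v + y` with `v` in a fixed finite ball and `‖y‖ ≤ ‖z‖ / M`. The radial limits, uniform
over that finite ball, control `f (n • v)`, and the increment bound controls `f z - f (n • v)`.
Countably many radial limits and the shape estimates at `ε = 1 / (k + 1)` hold simultaneously
almost surely.
-/

lemma norm_eq_max_abs (z : ℤ × ℤ) : ‖z‖ = max |(z.1 : ℝ)| |(z.2 : ℝ)| := by
  simp [Prod.norm_def, Int.norm_eq_abs]

lemma norm_nsmul_eq (n : ℕ) (z : ℤ × ℤ) : ‖n • z‖ = n * ‖z‖ := by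
  simp [norm_eq_max_abs, mul_max_of_nonneg]

lemma norm_toR (z : ℤ × ℤ) : ‖toR z‖ = ‖z‖ := by
  simp [toR, Prod.norm_def, Int.norm_eq_abs]

lemma toR_add (a b : ℤ × ℤ) : toR (a + b) = toR a + toR b := by
  simp [toR]

lemma toR_nsmul (n : ℕ) (v : ℤ × ℤ) : toR (n • v) = n • toR v := by
  simp [toR]

lemma znorm_nonneg (z : ℤ × ℤ) : 0 ≤ znorm z := Real.sqrt_nonneg _

lemma norm_le_znorm (z : ℤ × ℤ) : ‖z‖ ≤ znorm z := by
  rw [norm_eq_max_abs, znorm]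
  apply max_le <;> rw [← Real.sqrt_sq_eq_abs] <;> gcongr <;> nlinarith

lemma znorm_le_two_mul_norm (z : ℤ × ℤ) : znorm z ≤ 2 * ‖z‖ := by
  rw [norm_eq_max_abs, znorm, Real.sqrt_le_left (by positivity)]
  nlinarith [le_max_left |(z.1 : ℝ)| |(z.2 : ℝ)|, le_max_right |(z.1 : ℝ)| |(z.2 : ℝ)|,
    sq_abs (z.1 : ℝ), sq_abs (z.2 : ℝ), abs_nonneg (z.1 : ℝ), abs_nonneg (z.2 : ℝ)]

lemma exists_norm_sub_nsmul_lt (z : ℤ × ℤ) {n : ℕ} (hn : 0 < n) :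
    ∃ v : ℤ × ℤ, ‖z - n • v‖ < n ∧ n * ‖v‖ < ‖z‖ + n := by
  have hn' : (0 : ℤ) < n := by exact_mod_cast hn
  have hrem : ‖z - n • (z.1 / n, z.2 / n)‖ < n := by
    have hmod : z - n • (z.1 / n, z.2 / n) = (z.1 % n, z.2 % n) := by
      ext <;> simp [Int.emod_def]
    have hlt : ∀ a : ℤ, |((a % n : ℤ) : ℝ)| < n := fun a => by
      rw [abs_of_nonneg (by exact_mod_cast Int.emod_nonneg a hn'.ne')]
      exact_mod_cast Int.emod_lt_of_pos a hn'
    rw [hmod, norm_eq_max_abs]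
    exact max_lt (hlt _) (hlt _)
  refine ⟨_, hrem, ?_⟩
  calc (n : ℝ) * ‖(z.1 / n, z.2 / n)‖ = ‖z - (z - n • (z.1 / n, z.2 / n))‖ := by
        rw [sub_sub_cancel, norm_nsmul_eq]
    _ ≤ ‖z‖ + ‖z - n • (z.1 / n, z.2 / n)‖ := norm_sub_le _ _
    _ < ‖z‖ + n := by gcongr

lemma exists_bounded_nsmul_near (M : ℕ) (hM : 0 < M) (z : ℤ × ℤ) (hz : M ≤ ‖z‖) :
    ∃ n : ℕ, ∃ v : ℤ × ℤ, ‖v‖ ≤ 2 * M + 1 ∧ n * M ≤ ‖z‖ ∧ ‖z‖ < (n + 1) * M ∧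
      ‖z - n • v‖ ≤ ‖z‖ / M := by
  have hM' : (0 : ℝ) < M := by exact_mod_cast hM
  set n := ⌊‖z‖ / M⌋₊
  have hn_le : n * M ≤ ‖z‖ := (le_div_iff₀ hM').1 (Nat.floor_le (by positivity))
  have hn_gt : ‖z‖ < (n + 1) * M := (div_lt_iff₀ hM').1 (Nat.lt_floor_add_one _)
  have hn : 0 < n := Nat.floor_pos.2 ((one_le_div hM').2 hz)
  have hn' : (1 : ℝ) ≤ n := by exact_mod_cast hn
  obtain ⟨v, hy, hv⟩ := exists_norm_sub_nsmul_lt z hn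
  refine ⟨n, v, ?_, hn_le, hn_gt, ?_⟩
  · have : (n : ℝ) * ‖v‖ < n * (2 * M + 1) := by nlinarith
    exact (lt_of_mul_lt_mul_left this (by positivity)).le
  · exact hy.le.trans ((le_div_iff₀ hM').2 hn_le)

lemma eventually_abs_le_mul_of_tendsto_div {g : ℕ → ℝ}
    (hg : Tendsto (fun n : ℕ => g n / n) atTop (𝓝 0)) {δ : ℝ} (hδ : 0 < δ) :
    ∀ᶠ n : ℕ in atTop, |g n| ≤ δ * n := by
  filter_upwards [(Metric.tendsto_nhds.1 hg) δ hδ, eventually_gt_atTop 0] with n hn hpos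
  have hpos' : (0 : ℝ) < n := by exact_mod_cast hpos
  rw [Real.dist_eq, sub_zero, abs_div, Nat.abs_cast, div_lt_iff₀ hpos'] at hn
  exact hn.le

theorem exists_abs_le_mul_norm_of_tendsto_nsmul_div (f : ℤ × ℤ → ℝ) {C : ℝ} (hC : 0 ≤ C)
    (hrad : ∀ v, Tendsto (fun n : ℕ => f (n • v) / n) atTop (𝓝 0))
    (hinc : ∀ δ > 0, ∃ N : ℝ, ∀ x, N ≤ ‖x‖ → ∀ y,
      |f (x + y) - f x| ≤ C * ‖y‖ + δ * max ‖x‖ ‖y‖)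
    {ε : ℝ} (hε : 0 < ε) : ∃ R : ℝ, ∀ z, R ≤ ‖z‖ → |f z| ≤ ε * ‖z‖ := by
  -- `M` makes the increment over the remainder, at most `C ‖z‖ / M`, smaller than `ε ‖z‖ / 3`.
  obtain ⟨M, hM⟩ := exists_nat_gt (max 2 (3 * C / ε))
  have hM2 : (2 : ℝ) < M := (le_max_left _ _).trans_lt hM
  have hM0 : 0 < M := by exact_mod_cast (zero_lt_two.trans hM2)
  have hCM : C / M ≤ ε / 3 := by
    rw [div_le_iff₀ (by positivity)]
    have := (le_max_right _ _).trans_lt hM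
    rw [div_lt_iff₀ hε] at this
    linarith
  obtain ⟨Nx, hNx⟩ := hinc (ε / 6) (by positivity)
  obtain ⟨Nn, hNn⟩ := eventually_atTop.1 <|
    (isCompact_closedBall (0 : ℤ × ℤ) (2 * M + 1)).finite_of_discrete.eventually_all.2
      fun v _ => eventually_abs_le_mul_of_tendsto_div (hrad v) (by positivity : 0 < ε / 3)
  refine ⟨max (2 * Nx) (M * (Nn + 1)), fun z hz => ?_⟩
  obtain ⟨hzx, hzn⟩ := max_le_iff.1 hz
  have hzM : M ≤ ‖z‖ := by
    have : (M : ℝ) ≤ M * (Nn + 1) := by nlinarith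
    linarith
  obtain ⟨n, v, hv, hn_le, hn_gt, hy⟩ := exists_bounded_nsmul_near M hM0 z hzM
  set y := z - n • v
  have hzy : n • v + y = z := add_sub_cancel _ _
  have hy_le : ‖y‖ ≤ ‖z‖ / 2 :=
    hy.trans (div_le_div_of_nonneg_left (norm_nonneg _) two_pos hM2.le)
  have hx : ‖z‖ / 2 ≤ ‖n • v‖ ∧ ‖n • v‖ ≤ 2 * ‖z‖ := by
    have h1 := norm_sub_norm_le z y
    have h2 := norm_sub_le z y
    rw [sub_sub_cancel] at h1 h2
    constructor <;> linarith [norm_nonneg z]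
  have hrad_z : |f (n • v)| ≤ ε / 3 * ‖z‖ := by
    have hnN : Nn ≤ n := by
      have : (Nn : ℝ) < n + 1 := by nlinarith
      exact_mod_cast Nat.lt_succ_iff.1 (by exact_mod_cast this)
    refine (hNn n hnN v (mem_closedBall_zero_iff.2 hv)).trans ?_
    gcongr
    nlinarith [norm_nonneg z]
  have hinc_z : |f z - f (n • v)| ≤ ε / 3 * ‖z‖ + ε / 3 * ‖z‖ := by
    have := hNx (n • v) (by linarith) y
    rw [hzy] at this
    refine this.trans (add_le_add ?_ ?_)
    · calc C * ‖y‖ ≤ C * (‖z‖ / M) := by gcongr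
        _ = C / M * ‖z‖ := by ring
        _ ≤ ε / 3 * ‖z‖ := by gcongr
    · have : max ‖n • v‖ ‖y‖ ≤ 2 * ‖z‖ := max_le hx.2 (by linarith [norm_nonneg z])
      nlinarith
  calc |f z| = |f (n • v) + (f z - f (n • v))| := by ring_nf
    _ ≤ |f (n • v)| + |f z - f (n • v)| := abs_add_le _ _
    _ ≤ ε * ‖z‖ := by linarith

lemma exists_le_mul_norm_of_subadditive (μ : ℝ × ℝ → ℝ)
    (hsub : ∀ x y, μ (x + y) ≤ μ x + μ y) (hhom : ∀ (r : ℝ) x, μ (r • x) = |r| * μ x) :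
    ∃ C, 0 ≤ C ∧ ∀ x, μ x ≤ C * ‖x‖ := by
  refine ⟨|μ (1, 0)| + |μ (0, 1)|, by positivity, fun x => ?_⟩
  have hx : x = x.1 • ((1 : ℝ), (0 : ℝ)) + x.2 • ((0 : ℝ), (1 : ℝ)) := by simp
  have h1 : |x.1| ≤ ‖x‖ := le_max_left _ _
  have h2 : |x.2| ≤ ‖x‖ := le_max_right _ _
  have hcoord : ∀ a c : ℝ, |a| ≤ ‖x‖ → |a| * c ≤ ‖x‖ * |c| := fun a c ha =>
    (mul_le_mul_of_nonneg_left (le_abs_self c) (abs_nonneg a)).trans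
      (mul_le_mul_of_nonneg_right ha (abs_nonneg c))
  calc μ x ≤ |x.1| * μ (1, 0) + |x.2| * μ (0, 1) := by
        rw [← hhom, ← hhom]; conv_lhs => rw [hx]
        exact hsub _ _
    _ ≤ ‖x‖ * |μ (1, 0)| + ‖x‖ * |μ (0, 1)| := add_le_add (hcoord _ _ h1) (hcoord _ _ h2)
    _ = (|μ (1, 0)| + |μ (0, 1)|) * ‖x‖ := by ring

theorem finite_setOf_mul_znorm_lt_abs_cocycle_sub (T B : ℤ × ℤ → ℤ × ℤ → ℝ)
    (μ : ℝ × ℝ → ℝ) {Cμ : ℝ} (hCμ : 0 ≤ Cμ) (hμ : ∀ x, μ x ≤ Cμ * ‖x‖)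
    (hshape : ∀ δ > 0, ∃ N : ℝ, ∀ z, N ≤ znorm z → ∀ y,
      |T z (z + y) - μ (toR y)| ≤ δ * max (znorm z) (znorm y))
    (hcoc : ∀ x y z, B x z = B x y + B y z) (hBT : ∀ x y, |B x y| ≤ T x y)
    (ρ : ℝ × ℝ →ₗ[ℝ] ℝ)
    (hrad : ∀ v, Tendsto (fun n : ℕ => B 0 (n • v) / n) atTop (𝓝 (ρ (toR v))))
    {ε : ℝ} (hε : 0 < ε) : {z | ε * znorm z < |B 0 z - ρ (toR z)|}.Finite := by
  set f : ℤ × ℤ → ℝ := fun z => B 0 z - ρ (toR z)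
  have hρ : ∀ x, |ρ x| ≤ ‖LinearMap.toContinuousLinearMap ρ‖ * ‖x‖ :=
    (LinearMap.toContinuousLinearMap ρ).le_opNorm
  have hrad' : ∀ v, Tendsto (fun n : ℕ => f (n • v) / n) atTop (𝓝 0) := fun v => by
    refine ((hrad v).sub_const (ρ (toR v))).congr' ?_ |>.trans (by rw [sub_self])
    filter_upwards [eventually_ne_atTop 0] with n hn
    simp only [f]
    rw [toR_nsmul, map_nsmul, nsmul_eq_mul n (ρ (toR v))]
    field_simp
  have hinc : ∀ δ > 0, ∃ N : ℝ, ∀ x, N ≤ ‖x‖ → ∀ y, |f (x + y) - f x| ≤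
      (Cμ + ‖LinearMap.toContinuousLinearMap ρ‖) * ‖y‖ + δ * max ‖x‖ ‖y‖ := by
    intro δ hδ
    obtain ⟨N, hN⟩ := hshape (δ / 2) (by positivity)
    refine ⟨N, fun x hx y => ?_⟩
    have hT := (abs_le.1 (hN x (hx.trans (norm_le_znorm x)) y)).2
    have hmax : max (znorm x) (znorm y) ≤ 2 * max ‖x‖ ‖y‖ := by
      rw [mul_max_of_nonneg _ _ zero_le_two]
      exact max_le_max (znorm_le_two_mul_norm x) (znorm_le_two_mul_norm y)
    have hdiff : f (x + y) - f x = B x (x + y) - ρ (toR y) := by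
      simp only [f, hcoc 0 x (x + y), toR_add, map_add]; ring
    rw [hdiff]
    have hμy := hμ (toR y)
    have hρy := hρ (toR y)
    rw [norm_toR] at hμy hρy
    have := mul_le_mul_of_nonneg_left hmax hδ.le
    have := abs_sub (B x (x + y)) (ρ (toR y))
    linarith [hBT x (x + y)]
  obtain ⟨R, hR⟩ := exists_abs_le_mul_norm_of_tendsto_nsmul_div f (by positivity) hrad' hinc hε
  refine (isCompact_closedBall (0 : ℤ × ℤ) R).finite_of_discrete.subset fun z hz => ?_
  have hz : ε * znorm z < |f z| := hz
  rw [mem_closedBall_zero_iff]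
  by_contra! hzR
  linarith [hR z hzR.le, mul_le_mul_of_nonneg_left (norm_le_znorm z) hε.le]

lemma ae_forall_pos_of_mono {α : Type*} [MeasurableSpace α] {m : Measure α} {P : α → ℝ → Prop}
    (hmono : ∀ a ε ε', ε ≤ ε' → P a ε → P a ε') (h : ∀ ε > 0, ∀ᵐ a ∂m, P a ε) :
    ∀ᵐ a ∂m, ∀ ε > 0, P a ε := by
  filter_upwards [ae_all_iff.2 fun k : ℕ => h (1 / (k + 1)) (by positivity)] with a ha ε hε
  obtain ⟨k, hk⟩ := exists_nat_one_div_lt hε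
  exact hmono a _ _ hk.le (ha k)

theorem busemann_uniform_linearity_general {Ω : Type*} [MeasurableSpace Ω]
    (ℙ : Measure Ω)
    (T : Ω → (ℤ × ℤ) → (ℤ × ℤ) → ℝ)
    (μ : ℝ × ℝ → ℝ)
    (hsub : ∀ x y : ℝ × ℝ, μ (x + y) ≤ μ x + μ y)
    (hhom : ∀ (r : ℝ) (x : ℝ × ℝ), μ (r • x) = |r| * μ x)
    (hext : ∀ ε : ℝ, 0 < ε → ∀ᵐ ω ∂ℙ, ∃ N : ℝ,
      ∀ z : ℤ × ℤ, N ≤ znorm z →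
        ∀ y : ℤ × ℤ, |T ω z (z + y) - μ (toR y)| ≤ ε * max (znorm z) (znorm y))
    (B : Ω → (ℤ × ℤ) → (ℤ × ℤ) → ℝ)
    (hcoc : ∀ (ω : Ω) (x y z : ℤ × ℤ), B ω x z = B ω x y + B ω y z)
    (hBT : ∀ (ω : Ω) (x y : ℤ × ℤ), |B ω x y| ≤ T ω x y)
    (ρ : ℝ × ℝ →ₗ[ℝ] ℝ)
    (hrad : ∀ v : ℤ × ℤ, ∀ᵐ ω ∂ℙ,
      Tendsto (fun n : ℕ => B ω 0 (n • v) / (n : ℝ)) atTop (nhds (ρ (toR v)))) :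
    ∀ᵐ ω ∂ℙ, ∀ ε : ℝ, 0 < ε →
      {z : ℤ × ℤ | ε * znorm z < |B ω 0 z - ρ (toR z)|}.Finite := by
  obtain ⟨Cμ, hCμ, hμ⟩ := exists_le_mul_norm_of_subadditive μ hsub hhom
  have hshape := ae_forall_pos_of_mono (fun ω δ δ' hδ ⟨N, hN⟩ =>
    ⟨N, fun z hz y => (hN z hz y).trans <|
      mul_le_mul_of_nonneg_right hδ (le_max_of_le_left (znorm_nonneg z))⟩) hext
  filter_upwards [ae_all_iff.2 hrad, hshape] with ω hradω hshapeω ε hε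
  exact finite_setOf_mul_znorm_lt_abs_cocycle_sub (T ω) (B ω) μ hCμ hμ hshapeω (hcoc ω)
    (hBT ω) ρ hradω hε

/-- if `T` satisfies the extended shape theorem with norm `μ`,
`B` is an additive cocycle with `|B| ≤ T`, and `B(0, nv)/n → ρ(v)` a.s. for every
`v ∈ ℤ²` (ρ linear), then almost surely `limsup_{|z|→∞} |B(0,z) − ρ(z)|/|z| = 0`. -/
theorem busemann_uniform_linearity {Ω : Type*} [MeasurableSpace Ω]
    (ℙ : Measure Ω) [IsProbabilityMeasure ℙ]
    (T : Ω → (ℤ × ℤ) → (ℤ × ℤ) → ℝ)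
    (μ : ℝ × ℝ → ℝ)
    (hsub : ∀ x y : ℝ × ℝ, μ (x + y) ≤ μ x + μ y)
    (hhom : ∀ (r : ℝ) (x : ℝ × ℝ), μ (r • x) = |r| * μ x)
    (hdef : ∀ x : ℝ × ℝ, μ x = 0 → x = 0)
    (hext : ∀ ε : ℝ, 0 < ε → ∀ᵐ ω ∂ℙ, ∃ N : ℝ,
      ∀ z : ℤ × ℤ, N ≤ znorm z →
        ∀ y : ℤ × ℤ, |T ω z (z + y) - μ (toR y)| ≤ ε * max (znorm z) (znorm y))
    (B : Ω → (ℤ × ℤ) → (ℤ × ℤ) → ℝ)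
    (hcoc : ∀ (ω : Ω) (x y z : ℤ × ℤ), B ω x z = B ω x y + B ω y z)
    (hBT : ∀ (ω : Ω) (x y : ℤ × ℤ), |B ω x y| ≤ T ω x y)
    (ρ : ℝ × ℝ →ₗ[ℝ] ℝ)
    (hrad : ∀ v : ℤ × ℤ, ∀ᵐ ω ∂ℙ,
      Tendsto (fun n : ℕ => B ω 0 (n • v) / (n : ℝ)) atTop (nhds (ρ (toR v)))) :
    ∀ᵐ ω ∂ℙ, ∀ ε : ℝ, 0 < ε →
      {z : ℤ × ℤ | ε * znorm z < |B ω 0 z - ρ (toR z)|}.Finite :=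
  busemann_uniform_linearity_general ℙ T μ hsub hhom hext B hcoc hBT ρ hrad
end
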